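/- Let d ≥ 2 and n ≥ 1 be integers and let u, v ∈ [0,1]^n. The trace norm between the qudit-encoded pure-state density matrices satisfies ‖ρ(u) − ρ(v)‖₁ = 2√( 1 − ∏_{i=1}^n cos^{2(d−1)}( |u_i − v_i| π/2 ) ). -/

import Mathlib

open MeasureTheory Metric Finset
open scoped ComplexOrder

noncomputable section

/-- The positive semidefinite square root `Matrix.PosSemidef.sqrt` of Mathlib (December 2024),
which has since been removed; reproduced here with its old definition. -/
def posSemidefSqrt {n : Type*} [Fintype n] [DecidableEq n] {A : Matrix n n ℂ}
    (hA : A.PosSemidef) : Matrix n n ℂ :=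
  hA.1.eigenvectorUnitary.1 * Matrix.diagonal ((↑) ∘ (√·) ∘ hA.1.eigenvalues) *
    (star hA.1.eigenvectorUnitary : Matrix n n ℂ)

/-- Trace norm of a complex square matrix: the trace of the positive semidefinite
square root of `Aᴴ * A`. -/
def traceNorm {m : Type*} [Fintype m] [DecidableEq m] (A : Matrix m m ℂ) : ℝ :=
  ((posSemidefSqrt (Matrix.posSemidef_conjTranspose_mul_self A)).trace).re

/-- Qudit encoding of a pixel value `u ∈ [0,1]`: the `j`-th component (0-indexed) is
`√(binom (d-1) j) · cos^{d-1-j}(πu/2) · sin^j(πu/2)`. -/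
def quditVec (d : ℕ) (u : ℝ) : Fin d → ℂ := fun j =>
  (Real.sqrt ((d - 1).choose j) *
    Real.cos (Real.pi * u / 2) ^ (d - 1 - (j : ℕ)) *
    Real.sin (Real.pi * u / 2) ^ (j : ℕ) : ℝ)

/-- Encoded product pure state `|Φ(u)⟩ = φ_d(u_1) ⊗ ⋯ ⊗ φ_d(u_n)`, with `(ℂ^d)^{⊗n}`
realized as functions `(Fin n → Fin d) → ℂ`. -/
def encState (d n : ℕ) (u : Fin n → ℝ) : (Fin n → Fin d) → ℂ := fun f =>
  ∏ i, quditVec d (u i) (f i)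

/-- Density matrix `ρ(u) = |Φ(u)⟩⟨Φ(u)|` of the encoded state. -/
def encRho (d n : ℕ) (u : Fin n → ℝ) :
    Matrix (Fin n → Fin d) (Fin n → Fin d) ℂ := fun a b =>
  encState d n u a * star (encState d n u b)

/-!
The encoded states are real unit vectors, and their overlap factorises over the tensor
factors: by the binomial theorem and the addition formula for the cosine,
`⟨φ_d(a), φ_d(b)⟩ = (cos a cos b + sin a sin b)^(d-1)` (angles `πa/2`, `πb/2`), so
`⟨Φ(u), Φ(v)⟩ = ∏ᵢ cos^(d-1)((uᵢ - vᵢ)π/2)`.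

For unit vectors `ψ, χ` with overlap `c`, the matrix `A = ψψ* - χχ*` is Hermitian with
`A³ = (1 - |c|²) A`. Hence `M = AᴴA` satisfies `M² = t M` with `t = 1 - |c|²`, so its square
root is `M / √t` and `‖A‖₁ = tr M / √t = 2t / √t = 2√t`.
-/

open scoped Matrix

open scoped MatrixOrder in
theorem posSemidefSqrt_eq_cfcSqrt {ι : Type*} [Fintype ι] [DecidableEq ι] {A : Matrix ι ι ℂ}
    (hA : A.PosSemidef) : posSemidefSqrt hA = CFC.sqrt A := by
  rw [CFC.sqrt_eq_cfc, cfc_nnreal_eq_real _ A, hA.1.cfc_eq]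
  simp only [posSemidefSqrt, Matrix.IsHermitian.cfc, Unitary.conjStarAlgAut_apply]
  congr 3
  funext i
  simp [Real.coe_sqrt, Real.coe_toNNReal', max_eq_left (hA.eigenvalues_nonneg i)]

theorem Matrix.PosSemidef.eq_zero_of_mul_self_eq_smul {ι : Type*} [Fintype ι]
    {M : Matrix ι ι ℂ} (hM : M.PosSemidef) {t : ℝ} (ht : t ≤ 0) (h : M * M = t • M) :
    M = 0 := by
  have hMM : 0 ≤ (Mᴴ * M).trace := (Matrix.posSemidef_conjTranspose_mul_self M).trace_nonneg
  rw [hM.1.eq, h, Matrix.trace_smul, Complex.real_smul] at hMM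
  have hle : (t : ℂ) * M.trace ≤ 0 :=
    mul_nonpos_of_nonpos_of_nonneg (by exact_mod_cast ht) hM.trace_nonneg
  rw [← Matrix.trace_conjTranspose_mul_self_eq_zero_iff, hM.1.eq, h, Matrix.trace_smul,
    Complex.real_smul]
  exact le_antisymm hle hMM

open scoped MatrixOrder in
theorem posSemidefSqrt_eq_smul_of_mul_self_eq_smul {ι : Type*} [Fintype ι] [DecidableEq ι]
    {M : Matrix ι ι ℂ} (hM : M.PosSemidef) {t : ℝ} (h : M * M = t • M) :
    posSemidefSqrt hM = (√t)⁻¹ • M := by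
  rw [posSemidefSqrt_eq_cfcSqrt]
  refine CFC.sqrt_unique ?_ (smul_nonneg (by positivity) hM.nonneg)
  rcases le_or_gt t 0 with ht | ht
  · -- here `√t = 0`, and the junk value `0⁻¹ = 0` matches `M = 0`
    simp [hM.eq_zero_of_mul_self_eq_smul ht h]
  · rw [smul_mul_smul, h, smul_smul, ← sq, inv_pow, Real.sq_sqrt ht.le,
      inv_mul_cancel₀ ht.ne', one_smul]

theorem traceNorm_eq_of_mul_self_eq_smul {ι : Type*} [Fintype ι] [DecidableEq ι]
    (A : Matrix ι ι ℂ) {t : ℝ} (h : (Aᴴ * A) * (Aᴴ * A) = t • (Aᴴ * A)) :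
    traceNorm A = (Aᴴ * A).trace.re / √t := by
  rw [traceNorm, posSemidefSqrt_eq_smul_of_mul_self_eq_smul _ h, Matrix.trace_smul,
    Complex.smul_re, smul_eq_mul, inv_mul_eq_div]

open Matrix in
theorem traceNorm_vecMulVec_sub_vecMulVec {ι : Type*} [Fintype ι] [DecidableEq ι]
    {ψ χ : ι → ℂ} (hψ : star ψ ⬝ᵥ ψ = 1) (hχ : star χ ⬝ᵥ χ = 1) :
    traceNorm (vecMulVec ψ (star ψ) - vecMulVec χ (star χ))
      = 2 * √(1 - ‖star ψ ⬝ᵥ χ‖ ^ 2) := by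
  set c := star ψ ⬝ᵥ χ
  set A := vecMulVec ψ (star ψ) - vecMulVec χ (star χ)
  have hχψ : star χ ⬝ᵥ ψ = star c := by rw [star_dotProduct]
  have hψχ : star ψ ⬝ᵥ χ = c := rfl
  have hc : star c * c = (‖c‖ : ℂ) ^ 2 := Complex.conj_mul' c
  have hA : Aᴴ = A := by simp [A]
  have hAA : A * A = vecMulVec ψ (star ψ) + vecMulVec χ (star χ)
      - c • vecMulVec ψ (star χ) - star c • vecMulVec χ (star ψ) := by
    simp only [A, sub_mul, mul_sub, vecMulVec_mul_vecMulVec, vecMulVec_smul, hψ, hχ, hχψ, one_smul]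
    abel
  have hAAA : A * A * A = ((1 - ‖c‖ ^ 2 : ℝ) : ℂ) • A := by
    rw [hAA]
    simp only [A, sub_mul, mul_sub, add_mul, Matrix.smul_mul, vecMulVec_mul_vecMulVec,
      vecMulVec_smul, hψ, hχ, hψχ, hχψ, one_smul]
    push_cast
    rw [← hc]
    module
  have hsq : (Aᴴ * A) * (Aᴴ * A) = (1 - ‖c‖ ^ 2) • (Aᴴ * A) := by
    rw [hA, ← mul_assoc, hAAA, Matrix.smul_mul, Complex.coe_smul]
  have htr : (Aᴴ * A).trace = 2 * ((1 - ‖c‖ ^ 2 : ℝ) : ℂ) := by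
    rw [hA, hAA]
    simp only [trace_sub, trace_add, trace_smul, trace_vecMulVec, smul_eq_mul]
    rw [dotProduct_comm ψ, dotProduct_comm χ, dotProduct_comm ψ, dotProduct_comm χ, hψ, hχ, hχψ,
      hψχ]
    push_cast
    linear_combination (-2 : ℂ) * hc
  rw [traceNorm_eq_of_mul_self_eq_smul A hsq, htr, Complex.re_mul_ofReal, Complex.re_ofNat,
    mul_div_assoc, Real.div_sqrt]

open Real in
theorem sum_sqrt_choose_mul_cos_pow_mul_sin_pow (m : ℕ) (A B : ℝ) :
    ∑ j ∈ range (m + 1), (√(m.choose j) * cos A ^ (m - j) * sin A ^ j) *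
      (√(m.choose j) * cos B ^ (m - j) * sin B ^ j) = cos (A - B) ^ m := by
  rw [cos_sub, add_comm (cos A * cos B), add_pow]
  refine sum_congr rfl fun j _ => ?_
  have hsqrt : √(m.choose j : ℝ) * √(m.choose j) = m.choose j :=
    mul_self_sqrt (Nat.cast_nonneg _)
  linear_combination (sin A ^ j * sin B ^ j * cos A ^ (m - j) * cos B ^ (m - j)) * hsqrt

theorem star_quditVec (d : ℕ) (a : ℝ) : star (quditVec d a) = quditVec d a := by
  funext j
  simp only [quditVec, Pi.star_apply, Complex.star_def, Complex.conj_ofReal]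

open Matrix Real in
theorem quditVec_dotProduct_quditVec {d : ℕ} (hd : 0 < d) (a b : ℝ) :
    quditVec d a ⬝ᵥ quditVec d b = ((cos ((a - b) * π / 2) ^ (d - 1) : ℝ) : ℂ) := by
  obtain ⟨m, rfl⟩ := Nat.exists_eq_add_one_of_ne_zero hd.ne'
  rw [show (a - b) * π / 2 = π * a / 2 - π * b / 2 by ring, Nat.add_sub_cancel,
    ← sum_sqrt_choose_mul_cos_pow_mul_sin_pow]
  simp only [dotProduct, quditVec, Nat.add_sub_cancel]
  exact_mod_cast Fin.sum_univ_eq_sum_range (fun j => (√(m.choose j) * cos (π * a / 2) ^ (m - j) *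
    sin (π * a / 2) ^ j) * (√(m.choose j) * cos (π * b / 2) ^ (m - j) * sin (π * b / 2) ^ j)) _

open Matrix in
theorem dotProduct_prod {ι κ R : Type*} [Fintype ι] [DecidableEq ι] [Fintype κ]
    [CommSemiring R] (x y : ι → κ → R) :
    (fun f : ι → κ => ∏ i, x i (f i)) ⬝ᵥ (fun f => ∏ i, y i (f i)) = ∏ i, x i ⬝ᵥ y i := by
  simp only [dotProduct, ← prod_mul_distrib]
  exact (Fintype.prod_sum fun i j => x i j * y i j).symm

theorem star_encState (d n : ℕ) (u : Fin n → ℝ) : star (encState d n u) = encState d n u := by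
  funext f
  simp only [Pi.star_apply, encState, star_prod]
  exact prod_congr rfl fun i _ => congr_fun (star_quditVec d (u i)) (f i)

open Matrix Real in
theorem encState_dotProduct_encState {d : ℕ} (hd : 0 < d) {n : ℕ} (u v : Fin n → ℝ) :
    encState d n u ⬝ᵥ encState d n v
      = ((∏ i, cos ((u i - v i) * π / 2) ^ (d - 1) : ℝ) : ℂ) := by
  rw [Complex.ofReal_prod]
  exact (dotProduct_prod _ _).trans
    (prod_congr rfl fun i _ => quditVec_dotProduct_quditVec hd (u i) (v i))

theorem encRho_eq_vecMulVec (d n : ℕ) (u : Fin n → ℝ) :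
    encRho d n u = Matrix.vecMulVec (encState d n u) (star (encState d n u)) := rfl

theorem stmt7_general (d n : ℕ) (hd : 2 ≤ d)
    (u v : Fin n → ℝ) :
    traceNorm (encRho d n u - encRho d n v)
      = 2 * Real.sqrt (1 - ∏ i, Real.cos (|u i - v i| * Real.pi / 2) ^ (2 * (d - 1))) := by
  have hd₀ : 0 < d := by omega
  have hunit (w : Fin n → ℝ) : star (encState d n w) ⬝ᵥ encState d n w = 1 := by
    simp [star_encState, encState_dotProduct_encState hd₀]
  have hcos (x : ℝ) : Real.cos (|x| * Real.pi / 2) = Real.cos (x * Real.pi / 2) := by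
    rcases abs_choice x with h | h <;> simp [h, neg_mul, neg_div, Real.cos_neg]
  rw [encRho_eq_vecMulVec, encRho_eq_vecMulVec,
    traceNorm_vecMulVec_sub_vecMulVec (hunit u) (hunit v), star_encState,
    encState_dotProduct_encState hd₀, Complex.norm_real, Real.norm_eq_abs, sq_abs,
    ← Finset.prod_pow]
  simp only [hcos, pow_mul']

/-- closed form for the trace norm between qudit-encoded pure states. -/
theorem stmt7 (d n : ℕ) (hd : 2 ≤ d) (hn : 1 ≤ n)
    (u v : Fin n → ℝ) (hu : ∀ i, u i ∈ Set.Icc (0 : ℝ) 1)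
    (hv : ∀ i, v i ∈ Set.Icc (0 : ℝ) 1) :
    traceNorm (encRho d n u - encRho d n v)
      = 2 * Real.sqrt (1 - ∏ i, Real.cos (|u i - v i| * Real.pi / 2) ^ (2 * (d - 1))) :=
  stmt7_general d n hd u v

end
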